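/- arXiv:2601.06587 — 3 statements merged into one kernel-verified Lean document; each statement's English description precedes it below -/
import Mathlib

section
/- Let B be a band and a, b ∈ B. If a ∈ BbB, then aba = a. -/
/-- The principal two-sided ideal `BbB = {u*b*v}` in a semigroup. -/
def prinIdeal {B : Type*} [Semigroup B] (b : B) : Set B := {z | ∃ u v : B, z = u * b * v}

/-- Swallowing: in a band, if `a ∈ BbB` then `aba = a`. -/
theorem band_swallowing {B : Type*} [Semigroup B] (hband : ∀ x : B, x * x = x)
    (a b : B) (h : a ∈ prinIdeal b) : a * b * a = a := by
  obtain ⟨u, v, rfl⟩ := h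
  calc u * b * v * b * (u * b * v)
      = (u * b) * (v * (b * (u * (b * v)))) := by simp [mul_assoc]
    _ = ((u * b) * (u * b)) * (v * (b * (u * (b * v)))) := by rw [hband]
    _ = u * ((b * (u * (b * v))) * (b * (u * (b * v)))) := by simp [mul_assoc]
    _ = u * (b * (u * (b * v))) := by rw [hband]
    _ = ((u * b) * (u * b)) * v := by simp [mul_assoc]
    _ = (u * b) * v := by rw [hband]
    _ = u * b * v := rfl
end

section
/- Let B be a band and a, b ∈ B with σ(a) = σ(b) (i.e., BaB = BbB). If ba = a and bb = b (i.e., a ≤_R b in Green's R-preorder) then b ≤_R a, i.e., ab = b. -/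
/-- The support map preserves strict `R`-inequalities: if `a ≤_R b` (i.e. `ba = a`)
and `σ(a) = σ(b)`, then `b ≤_R a` (i.e. `ab = b`). -/
theorem band_support_strict_R {B : Type*} [Semigroup B] (hband : ∀ x : B, x * x = x)
    (a b : B) (hsupp : prinIdeal a = prinIdeal b) (hR : b * a = a) (hb : b * b = b) :
    a * b = b := by
  have hbmem : b ∈ prinIdeal a := by
    rw [hsupp]
    exact ⟨b, b, by rw [hb, hb]⟩
  obtain ⟨u, v, huv⟩ := hbmem
  -- b = (u*b)*(a*v)
  have h1 : b = (u * b) * (a * v) := by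
    calc b = u * a * v := huv
    _ = u * (b * a) * v := by rw [hR]
    _ = (u * b) * (a * v) := by simp only [mul_assoc]
  -- (u*b)*b = b
  have h2 : (u * b) * b = b := by
    calc (u * b) * b = (u * b) * ((u * b) * (a * v)) := by rw [← h1]
    _ = ((u * b) * (u * b)) * (a * v) := by simp only [mul_assoc]
    _ = (u * b) * (a * v) := by rw [hband (u * b)]
    _ = b := h1.symm
  -- u*b = b
  have h3 : u * b = b := by
    have h : (u * b) * b = u * b := by rw [mul_assoc, hb]
    rw [← h, h2]
  -- b = a * v
  have h4 : b = a * v := by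
    calc b = (u * b) * (a * v) := h1
    _ = b * (a * v) := by rw [h3]
    _ = (b * a) * v := by rw [mul_assoc]
    _ = a * v := by rw [hR]
  rw [h4, ← mul_assoc, hband a]
end

section
/- Let B be a finite band, k a commutative ring, and σ: kB → kΛ(B) the k-algebra homomorphism induced by the support map. Then the kernel of σ is a nilpotent ideal of kB. -/
/-!
In a band, `BxyB = BxB ∩ ByB`, so `σ` factors through a ring homomorphism `kB → k[B/𝒥]` and
its kernel `K` is an ideal. Filter `K` by the size `d` of the principal ideals in the support. If
`x, y, z` have principal ideals of size at most `d` and `xyz` has one of size `d`, then all four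
lie in one `𝒥`-class, a rectangular band, where `xyz = xz` does not depend on `y`. So for
`g ∈ K` the coefficient of `b` in `x g z` is a coefficient of `σ g`, hence zero, and the product
of three elements of level `d + 1` has level `d`. Since level `0` is zero, `K ^ (3 ^ |B|) = 0`.
-/

open scoped Pointwise

/-- `setPow s n` is the set of products of `n+1` elements of `s` (pointwise). -/
def setPow {R : Type*} [Mul R] (s : Set R) : ℕ → Set R
  | 0 => s
  | n + 1 => setPow s n * s

/-- The `k`-linear map `kB → kΛ(B)` induced by the support map `σ : b ↦ BbB` of a band. -/
noncomputable def suppAlgMap {B : Type*} [Semigroup B] (k : Type*) [CommRing k] :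
    MonoidAlgebra k B →ₗ[k] MonoidAlgebra k (Set B) :=
  MonoidAlgebra.mapDomainLinearMap k k (prinIdeal (B := B))

section Band

variable {B : Type*} [Semigroup B]

theorem mul_mul_mem_prinIdeal {w b : B} (h : w ∈ prinIdeal b) (u v : B) :
    u * w * v ∈ prinIdeal b := by
  obtain ⟨p, q, rfl⟩ := h
  exact ⟨u * p, q * v, by simp only [mul_assoc]⟩

theorem prinIdeal_subset_of_mem {w b : B} (h : w ∈ prinIdeal b) : prinIdeal w ⊆ prinIdeal b := by
  rintro _ ⟨u, v, rfl⟩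
  exact mul_mul_mem_prinIdeal h u v

variable (hband : ∀ x : B, x * x = x)
include hband

theorem mem_prinIdeal_self (b : B) : b ∈ prinIdeal b :=
  ⟨b, b, by rw [hband, hband]⟩

theorem mul_mul_mem_prinIdeal_mul (a w b : B) : a * w * b ∈ prinIdeal (a * b) := by
  refine ⟨a * w * b, a * w * b, ?_⟩
  calc a * w * b = (a * w * b) * (a * w * b) := (hband _).symm
    _ = (a * w) * ((b * a) * (b * a)) * (w * b) := by rw [hband (b * a)]; simp only [mul_assoc]
    _ = (a * w * b) * (a * b) * (a * w * b) := by simp only [mul_assoc]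

theorem prinIdeal_mul (x y : B) : prinIdeal (x * y) = prinIdeal x ∩ prinIdeal y := by
  refine subset_antisymm (Set.subset_inter ?_ ?_) ?_
  · exact prinIdeal_subset_of_mem ⟨x, y, by rw [hband]⟩
  · exact prinIdeal_subset_of_mem ⟨x, y, by rw [mul_assoc, hband]⟩
  · rintro z ⟨⟨u, v, hz⟩, ⟨p, q, hz'⟩⟩
    have : z = u * (x * (v * p) * y) * q := by
      rw [← hband z]
      nth_rewrite 1 [hz]
      rw [hz']
      simp only [mul_assoc]
    exact this ▸ mul_mul_mem_prinIdeal (mul_mul_mem_prinIdeal_mul hband x (v * p) y) u q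

theorem mul_eq_self_of_eq_mul_mul {x a d : B} (h : x = a * x * d) : a * x = x := by
  conv_lhs => rw [h, ← mul_assoc, ← mul_assoc, hband, ← h]

theorem mul_mul_eq_self_of_mem_prinIdeal {x w : B} (h : x ∈ prinIdeal (x * w * x)) :
    x * w * x = x := by
  obtain ⟨u, v, hx⟩ := h
  have hux : u * x = x := mul_eq_self_of_eq_mul_mul hband (d := w * x * v) <|
    hx.trans (by simp only [mul_assoc])
  have huxwx : (u * x * w) * x = x := mul_eq_self_of_eq_mul_mul hband (d := v) <|
    hx.trans (by simp only [mul_assoc])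
  rwa [hux] at huxwx

theorem mul_mul_eq_self_of_prinIdeal_eq {x y : B} (h : prinIdeal x = prinIdeal y) :
    x * y * x = x := by
  refine mul_mul_eq_self_of_mem_prinIdeal hband ?_
  rw [prinIdeal_mul hband, prinIdeal_mul hband, ← h, Set.inter_self, Set.inter_self]
  exact mem_prinIdeal_self hband x

/-- Each `𝒥`-class of a band is a rectangular band. -/
theorem mul_mul_eq_mul_of_prinIdeal_eq {x y z : B} (hxy : prinIdeal x = prinIdeal y)
    (hyz : prinIdeal y = prinIdeal z) : x * y * z = x * z := by
  have hx : x * (y * z) * x = x := mul_mul_eq_self_of_prinIdeal_eq hband <| by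
    rw [prinIdeal_mul hband, ← hyz, Set.inter_self, hxy]
  have hz : z * x * z = z := mul_mul_eq_self_of_prinIdeal_eq hband (hxy.trans hyz).symm
  calc x * y * z = x * y * (z * x * z) := by rw [hz]
    _ = (x * (y * z) * x) * z := by simp only [mul_assoc]
    _ = x * z := by rw [hx]

end Band

section SupportCongruence

variable {B : Type*} [Semigroup B] {k : Type*} [CommRing k]

/-- The kernel of `b ↦ BbB`, with quotient `Λ(B)`; `BxyB = BxB ∩ ByB` makes it a congruence. -/
def prinIdealCon (hband : ∀ x : B, x * x = x) : Con B where
  toSetoid := Setoid.ker prinIdeal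
  mul' h₁ h₂ := by
    simp only [Setoid.ker_def, prinIdeal_mul hband] at h₁ h₂ ⊢
    rw [h₁, h₂]

theorem suppAlgMap_eq_zero_iff (hband : ∀ x : B, x * x = x) (f : MonoidAlgebra k B) :
    suppAlgMap k f = 0 ↔ MonoidAlgebra.mapDomain (prinIdealCon hband).mkMulHom f = 0 := by
  let ι : (prinIdealCon hband).Quotient → Set B := fun q ↦ q.liftOn prinIdeal fun _ _ h ↦ h
  have hι : Function.Injective ι := fun p q ↦ Con.induction_on₂ p q fun _ _ h ↦ (Con.eq _).2 h
  have hcomp : suppAlgMap k f =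
      MonoidAlgebra.mapDomain ι (MonoidAlgebra.mapDomain (prinIdealCon hband).mkMulHom f) := by
    change MonoidAlgebra.ofCoeff (Finsupp.mapDomain (ι ∘ (prinIdealCon hband).mkMulHom) f.coeff) = _
    rw [Finsupp.mapDomain_comp]
    rfl
  rw [hcomp]
  exact (MonoidAlgebra.mapDomain_injective hι).eq_iff' (MonoidAlgebra.mapDomain_zero _)

theorem suppAlgMap_mul_eq_zero_of_right (hband : ∀ x : B, x * x = x) {j : MonoidAlgebra k B}
    (hj : suppAlgMap k j = 0) (a : MonoidAlgebra k B) :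
    suppAlgMap k (a * j) = 0 := by
  rw [suppAlgMap_eq_zero_iff hband] at hj ⊢
  rw [MonoidAlgebra.mapDomain_mul, hj, mul_zero]

theorem suppAlgMap_mul_eq_zero_of_left (hband : ∀ x : B, x * x = x) {j : MonoidAlgebra k B}
    (hj : suppAlgMap k j = 0) (a : MonoidAlgebra k B) :
    suppAlgMap k (j * a) = 0 := by
  rw [suppAlgMap_eq_zero_iff hband] at hj ⊢
  rw [MonoidAlgebra.mapDomain_mul, hj, zero_mul]

end SupportCongruence

theorem MonoidAlgebra.coeff_single_mul_mul_single {k : Type*} [CommSemiring k] {B : Type*}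
    [Mul B] (x z : B) (r s : k) (g : MonoidAlgebra k B) :
    (single x r * g * single z s).coeff =
      (r * s) • Finsupp.mapDomain (fun y ↦ x * y * z) g.coeff := by
  induction g using MonoidAlgebra.induction_linear with
  | zero => simp
  | add f g hf hg =>
    rw [mul_add, add_mul, coeff_add, hf, hg, coeff_add, Finsupp.mapDomain_add, smul_add]
  | single y t =>
    rw [single_mul_single, single_mul_single, coeff_single, coeff_single, Finsupp.mapDomain_single,
      Finsupp.smul_single, smul_eq_mul, mul_right_comm]

section Nilpotency

variable {B : Type*} [Semigroup B] {k : Type*} [CommRing k]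

theorem mapDomain_mul_mul_apply_eq_zero [Finite B] (hband : ∀ x : B, x * x = x)
    {M : Type*} [AddCommMonoid M] {g : B →₀ M} (hg : Finsupp.mapDomain prinIdeal g = 0) {d : ℕ}
    (hgd : ∀ y ∈ g.support, (prinIdeal y).ncard ≤ d) {x z b : B}
    (hx : (prinIdeal x).ncard ≤ d) (hz : (prinIdeal z).ncard ≤ d)
    (hb : d ≤ (prinIdeal b).ncard) :
    Finsupp.mapDomain (fun y ↦ x * y * z) g b = 0 := by
  classical
  by_cases hbg : b ∈ (fun y ↦ x * y * z) '' g.support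
  swap
  · exact Finsupp.mapDomain_of_not_mem_image_support hbg
  obtain ⟨y₀, hy₀, rfl⟩ := hbg
  have hJ : ∀ y, prinIdeal (x * y * z) = prinIdeal x ∩ prinIdeal y ∩ prinIdeal z := fun y ↦ by
    rw [prinIdeal_mul hband, prinIdeal_mul hband]
  have hmax : ∀ w, prinIdeal (x * y₀ * z) ⊆ prinIdeal w → (prinIdeal w).ncard ≤ d →
      prinIdeal w = prinIdeal (x * y₀ * z) := fun w hw hwd ↦
    (Set.eq_of_subset_of_ncard_le hw (hwd.trans hb) (Set.toFinite _)).symm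
  have hJx := hmax x (hJ y₀ ▸ fun _ h ↦ h.1.1) hx
  have hJy₀ := hmax y₀ (hJ y₀ ▸ fun _ h ↦ h.1.2) (hgd y₀ hy₀)
  have hJz := hmax z (hJ y₀ ▸ fun _ h ↦ h.2) hz
  -- On the `𝒥`-class of `x * y₀ * z`, which is a rectangular band, `y ↦ x * y * z` is constant.
  have hfiber : ∀ y ∈ g.support, x * y * z = x * y₀ * z ↔ prinIdeal y = prinIdeal y₀ := by
    intro y hy
    constructor
    · intro h
      exact (hmax y (h ▸ hJ y ▸ fun _ h ↦ h.1.2) (hgd y hy)).trans hJy₀.symm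
    · intro h
      have hy := h.trans hJy₀
      rw [mul_mul_eq_mul_of_prinIdeal_eq hband (hJx.trans hy.symm) (hy.trans hJz.symm),
        mul_mul_eq_mul_of_prinIdeal_eq hband (hJx.trans hJy₀.symm) (hJy₀.trans hJz.symm)]
  rw [Finsupp.mapDomain_apply_eq_sum, Finset.filter_congr hfiber,
    ← Finsupp.mapDomain_apply_eq_sum, hg, Finsupp.zero_apply]

theorem coeff_mul_mul_eq_zero_of_suppAlgMap_eq_zero [Finite B] (hband : ∀ x : B, x * x = x)
    {f g h : MonoidAlgebra k B} (hg : suppAlgMap k g = 0) {d : ℕ}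
    (hfd : ∀ x ∈ f.coeff.support, (prinIdeal x).ncard ≤ d)
    (hgd : ∀ y ∈ g.coeff.support, (prinIdeal y).ncard ≤ d)
    (hhd : ∀ z ∈ h.coeff.support, (prinIdeal z).ncard ≤ d) {b : B}
    (hb : d ≤ (prinIdeal b).ncard) :
    (f * g * h).coeff b = 0 := by
  rw [← f.sum_coeff_single, ← h.sum_coeff_single]
  simp only [Finsupp.sum, Finset.sum_mul, Finset.mul_sum, MonoidAlgebra.coeff_sum,
    Finsupp.finsetSum_apply, MonoidAlgebra.coeff_single_mul_mul_single, Finsupp.smul_apply]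
  refine Finset.sum_eq_zero fun z hz ↦ Finset.sum_eq_zero fun x hx ↦ ?_
  have hg' : Finsupp.mapDomain prinIdeal g.coeff = 0 := MonoidAlgebra.coeff_eq_zero.2 hg
  rw [mapDomain_mul_mul_apply_eq_zero hband hg' hgd (hfd x hx) (hhd z hz) hb, smul_zero]

variable (k) in
def kerFiltration (d : ℕ) : Set (MonoidAlgebra k B) :=
  {f | suppAlgMap k f = 0 ∧ ∀ b ∈ f.coeff.support, (prinIdeal b).ncard ≤ d}

theorem kerFiltration_mul_mul_subset [Finite B] (hband : ∀ x : B, x * x = x) (d : ℕ) :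
    kerFiltration k (d + 1) * kerFiltration k (d + 1) * kerFiltration k (d + 1) ⊆
      kerFiltration (B := B) k d := by
  rintro _ ⟨_, ⟨f, ⟨hf, hfd⟩, g, ⟨hg, hgd⟩, rfl⟩, h, ⟨-, hhd⟩, rfl⟩
  refine ⟨suppAlgMap_mul_eq_zero_of_left hband (suppAlgMap_mul_eq_zero_of_right hband hg f) h,
    fun b hb ↦ ?_⟩
  by_contra hbd
  exact Finsupp.mem_support_iff.1 hb
    (coeff_mul_mul_eq_zero_of_suppAlgMap_eq_zero hband hg hfd hgd hhd (by omega))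

theorem ker_subset_kerFiltration_card [Finite B] :
    {f : MonoidAlgebra k B | suppAlgMap k f = 0} ⊆ kerFiltration k (Nat.card B) :=
  fun _ hf ↦ ⟨hf, fun _ _ ↦ Set.ncard_le_card _⟩

theorem kerFiltration_zero_subset [Finite B] (hband : ∀ x : B, x * x = x) :
    kerFiltration (B := B) k 0 ⊆ {0} := by
  rintro f ⟨-, hf⟩
  rw [Set.mem_singleton_iff, ← MonoidAlgebra.coeff_eq_zero, ← Finsupp.support_eq_empty]
  refine Finset.eq_empty_of_forall_notMem fun b hb ↦ ?_
  have := (Set.ncard_pos (Set.toFinite _)).2 ⟨b, mem_prinIdeal_self hband b⟩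
  exact absurd (hf b hb) (by omega)

end Nilpotency

theorem setPow_add {R : Type*} [Semigroup R] (s : Set R) (m n : ℕ) :
    setPow s (m + n + 1) = setPow s m * setPow s n := by
  induction n with
  | zero => rfl
  | succ n ih => rw [← add_assoc, setPow, ih, setPow, mul_assoc]

theorem setPow_three_pow_sub_one_subset {R : Type*} [Semigroup R] {s : Set R} {S : ℕ → Set R}
    (hS : ∀ d, S (d + 1) * S (d + 1) * S (d + 1) ⊆ S d) {n : ℕ} (hs : s ⊆ S n) :
    setPow s (3 ^ n - 1) ⊆ S 0 := by
  suffices h : ∀ m d, d + m = n → setPow s (3 ^ m - 1) ⊆ S d from h n 0 (zero_add n)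
  intro m
  induction m with
  | zero => rintro d rfl; exact hs
  | succ m ih =>
    intro d hmd
    have h3 : 3 ^ (m + 1) - 1 = ((3 ^ m - 1) + (3 ^ m - 1) + 1) + (3 ^ m - 1) + 1 := by
      have := Nat.one_le_pow m 3 (by norm_num)
      rw [pow_succ]; omega
    have ih' := ih (d + 1) (by omega)
    rw [h3, setPow_add, setPow_add]
    exact (Set.mul_subset_mul (Set.mul_subset_mul ih' ih') ih').trans (hS d)

/-- Brown's theorem: for a finite band `B` and commutative ring `k`, the kernel of the
map `kB → kΛ(B)` induced by the support map `b ↦ BbB` is a nilpotent two-sided ideal. -/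
theorem band_support_kernel_nilpotent {B : Type*} [Semigroup B] [Fintype B]
    (hband : ∀ x : B, x * x = x) (k : Type*) [CommRing k] :
    (∀ (a j : MonoidAlgebra k B), suppAlgMap k j = 0 →
        suppAlgMap k (a * j) = 0 ∧ suppAlgMap k (j * a) = 0) ∧
    (∃ n : ℕ, setPow {f : MonoidAlgebra k B | suppAlgMap k f = 0} n ⊆ {0}) :=
  ⟨fun a _ hj ↦
    ⟨suppAlgMap_mul_eq_zero_of_right hband hj a, suppAlgMap_mul_eq_zero_of_left hband hj a⟩,
    3 ^ Nat.card B - 1,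
    (setPow_three_pow_sub_one_subset (kerFiltration_mul_mul_subset hband)
      ker_subset_kerFiltration_card).trans (kerFiltration_zero_subset hband)⟩
end
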